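/- Every nonzero 2-dimensional Leibniz algebra over ℂ is isomorphic to exactly one of the following algebras, given by a multiplication table on a basis e1, e2 (all unlisted products of basis elements are zero): L1: [e1,e1] = e2; L2: [e1,e2] = e1; L3: [e1,e2] = e2, [e2,e1] = −e2. In particular L1, L2, L3 are pairwise non-isomorphic. -/

import Mathlib

noncomputable section

/-- The 2-dimensional complex vector space. -/
abbrev V2 : Type := Fin 2 → ℂ

/-- The bilinear multiplication on `V2` determined by a table of structure constants:
`c i j` is the product of the `i`-th and `j`-th basis vectors. -/
def tm (c : Fin 2 → Fin 2 → V2) : V2 → V2 → V2 :=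
  fun x y => ∑ i, ∑ j, (x i * y j) • c i j

/-- Multiplication table with the given values of `e1*e1`, `e1*e2`, `e2*e1`, `e2*e2`. -/
def tbl (a b c d : V2) : Fin 2 → Fin 2 → V2 := ![![a, b], ![c, d]]

/-- The zero multiplication on `V2`. -/
def zm : V2 → V2 → V2 := fun _ _ => 0

/-- Isomorphism of algebras with one multiplication: a ℂ-linear bijection preserving
the multiplication. -/
def Iso1 {A : Type*} [AddCommGroup A] [Module ℂ A] {B : Type*} [AddCommGroup B]
    [Module ℂ B] (μ : A → A → A) (ν : B → B → B) : Prop :=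
  ∃ φ : A ≃ₗ[ℂ] B, ∀ x y, φ (μ x y) = ν (φ x) (φ y)

/-- Isomorphism of algebras with two multiplications: a ℂ-linear bijection preserving
both multiplications. -/
def Iso2 {A : Type*} [AddCommGroup A] [Module ℂ A] {B : Type*} [AddCommGroup B]
    [Module ℂ B] (μ₁ μ₂ : A → A → A) (ν₁ ν₂ : B → B → B) : Prop :=
  ∃ φ : A ≃ₗ[ℂ] B,
    (∀ x y, φ (μ₁ x y) = ν₁ (φ x) (φ y)) ∧ (∀ x y, φ (μ₂ x y) = ν₂ (φ x) (φ y))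

/-- The commutative associative algebra A01: `e1·e1 = e1`, `e2·e2 = e2`. -/
def cA01 : Fin 2 → Fin 2 → V2 := tbl ![1,0] 0 0 ![0,1]

/-- The commutative associative algebra A02: `e1·e1 = e1`, `e1·e2 = e2·e1 = e2`. -/
def cA02 : Fin 2 → Fin 2 → V2 := tbl ![1,0] ![0,1] ![0,1] 0

/-- The commutative associative algebra A03: `e1·e1 = e1`. -/
def cA03 : Fin 2 → Fin 2 → V2 := tbl ![1,0] 0 0 0

/-- The commutative associative algebra A04: `e1·e1 = e2`. -/
def cA04 : Fin 2 → Fin 2 → V2 := tbl ![0,1] 0 0 0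

/-- The three nonzero 2-dimensional Leibniz algebras L1, L2, L3. -/
def leibAlg : Fin 3 → Fin 2 → Fin 2 → V2 :=
  ![tbl ![0,1] 0 0 0, tbl 0 ![1,0] 0 0, tbl 0 ![0,1] ![0,-1] 0]

/-! If `[x, x] = 0` for all `x`, the bracket is alternating. Take `c = [a, w] ≠ 0` and write
`c = α a + β w`; then `[a, c] = β c` and `[w, c] = -α c`, so some `u` has `[u, c] = c` and
`(u, c)` is a basis with the table of L3. Otherwise pick `e` with `f = [e, e] ≠ 0`. The Leibniz
identity with `y = z` gives `[x, [y, y]] = 0`, so `(e, f)` is a basis and `[f, e] = β f`; the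
basis `(e, f)` realises L1 if `β = 0`, and `(f, β⁻¹ (e - β⁻¹ f))` realises L2 otherwise.
Commutativity singles out L1 and anticommutativity L3, and both are isomorphism invariants. -/

open Module

section Iso

variable {A B : Type*} [AddCommGroup A] [Module ℂ A] [AddCommGroup B] [Module ℂ B]
  {μ : A → A → A} {ν : B → B → B}

theorem Iso1.symm (h : Iso1 μ ν) : Iso1 ν μ := by
  obtain ⟨φ, hφ⟩ := h
  refine ⟨φ.symm, fun x y => ?_⟩
  rw [φ.symm_apply_eq, hφ, φ.apply_symm_apply, φ.apply_symm_apply]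

theorem Iso1.swap_eq_smul (h : Iso1 μ ν) {c : ℂ} (hμ : ∀ x y, μ x y = c • μ y x) (u v : B) :
    ν u v = c • ν v u := by
  obtain ⟨φ, hφ⟩ := h
  have huv := hφ (φ.symm u) (φ.symm v)
  have hvu := hφ (φ.symm v) (φ.symm u)
  simp only [φ.apply_symm_apply] at huv hvu
  rw [← huv, ← hvu, hμ, map_smul]

end Iso

theorem tm_leibAlg_zero (x y : V2) : tm (leibAlg 0) x y = ![0, x 0 * y 0] := by
  ext k; fin_cases k <;> simp [tm, leibAlg, tbl, Fin.sum_univ_two]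

theorem tm_leibAlg_one (x y : V2) : tm (leibAlg 1) x y = ![x 0 * y 1, 0] := by
  ext k; fin_cases k <;> simp [tm, leibAlg, tbl, Fin.sum_univ_two]

theorem tm_leibAlg_two (x y : V2) : tm (leibAlg 2) x y = ![0, x 0 * y 1 - x 1 * y 0] := by
  ext k; fin_cases k <;> simp [tm, leibAlg, tbl, Fin.sum_univ_two]; ring

theorem leibAlg_comm_iff (i : Fin 3) :
    (∀ x y, tm (leibAlg i) x y = tm (leibAlg i) y x) ↔ i = 0 := by
  match i with
  | 0 => simp [tm_leibAlg_zero, mul_comm]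
  | 1 => simpa [tm_leibAlg_one] using ⟨![1, 0], ![0, 1], by norm_num⟩
  | 2 => simpa [tm_leibAlg_two] using ⟨![1, 0], ![0, 1], by norm_num⟩

theorem leibAlg_anticomm_iff (i : Fin 3) :
    (∀ x y, tm (leibAlg i) x y = -tm (leibAlg i) y x) ↔ i = 2 := by
  match i with
  | 0 => simpa [tm_leibAlg_zero] using ⟨![1, 0], ![1, 0], by norm_num⟩
  | 1 => simpa [tm_leibAlg_one] using ⟨![1, 0], ![0, 1], by norm_num⟩
  | 2 => simp [tm_leibAlg_two, mul_comm]

theorem eq_of_iso1_leibAlg {i j : Fin 3} (h : Iso1 (tm (leibAlg i)) (tm (leibAlg j))) :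
    i = j := by
  have transfer (c : ℂ) : (∀ x y, tm (leibAlg i) x y = c • tm (leibAlg i) y x) ↔
      (∀ x y, tm (leibAlg j) x y = c • tm (leibAlg j) y x) :=
    ⟨h.swap_eq_smul, h.symm.swap_eq_smul⟩
  have hcomm := transfer 1
  have hanti := transfer (-1)
  simp only [one_smul, neg_one_smul, leibAlg_comm_iff, leibAlg_anticomm_iff] at hcomm hanti
  clear transfer h
  revert i j
  decide

theorem linearIndependent_pair_of_map_eq_zero {K M N : Type*} [Field K] [AddCommGroup M]
    [Module K M] [AddCommGroup N] [Module K N] (g : M →ₗ[K] N) {v w : M} (hv : g v ≠ 0)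
    (hw : g w = 0) (hw₀ : w ≠ 0) : LinearIndependent K ![v, w] := by
  rw [LinearIndependent.pair_symm_iff, LinearIndependent.pair_iff' hw₀]
  rintro a rfl
  simp [hw] at hv

section Classification

variable {L : Type*} [AddCommGroup L] [Module ℂ L] {br : L →ₗ[ℂ] L →ₗ[ℂ] L}

theorem exists_eq_smul_add_smul (hdim : finrank ℂ L = 2) {v w : L}
    (hvw : LinearIndependent ℂ ![v, w]) (z : L) : ∃ α β : ℂ, z = α • v + β • w := by
  have hspan := hvw.span_eq_top_of_card_eq_finrank (by simp [hdim])
  rw [Matrix.range_cons_cons_empty] at hspan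
  obtain ⟨α, β, h⟩ := Submodule.mem_span_pair.mp (hspan ▸ Submodule.mem_top : z ∈ _)
  exact ⟨α, β, h.symm⟩

theorem iso1_tm_of_basis (b : Basis (Fin 2) ℂ L) (c : Fin 2 → Fin 2 → V2)
    (h : ∀ i j, br (b i) (b j) = ∑ k, c i j k • b k) :
    Iso1 (fun x y => br x y) (tm c) := by
  refine ⟨b.equivFun, fun x y => ?_⟩
  obtain ⟨x, rfl⟩ := b.equivFun.symm.surjective x
  obtain ⟨y, rfl⟩ := b.equivFun.symm.surjective y
  simp only [← b.equivFun_symm_apply] at h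
  rw [LinearEquiv.apply_symm_apply, LinearEquiv.apply_symm_apply, b.equivFun_symm_apply,
    b.equivFun_symm_apply]
  simp only [map_sum, map_smul, LinearMap.sum_apply, LinearMap.smul_apply, h,
    LinearEquiv.apply_symm_apply, tm, Finset.smul_sum, smul_smul, mul_comm (y _)]
  exact Finset.sum_comm

theorem iso1_tm_of_linearIndependent (hdim : finrank ℂ L = 2) {v w : L}
    (hvw : LinearIndependent ℂ ![v, w]) (c : Fin 2 → Fin 2 → V2)
    (h : ∀ i j, br (![v, w] i) (![v, w] j) = c i j 0 • v + c i j 1 • w) :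
    Iso1 (fun x y => br x y) (tm c) := by
  refine iso1_tm_of_basis (basisOfLinearIndependentOfCardEqFinrank hvw (by simp [hdim])) c ?_
  simpa [Fin.sum_univ_two] using h

theorem iso1_leibAlg_zero (hdim : finrank ℂ L = 2) {e₁ e₂ : L}
    (he : LinearIndependent ℂ ![e₁, e₂]) (h₁₁ : br e₁ e₁ = e₂) (h₁₂ : br e₁ e₂ = 0)
    (h₂₁ : br e₂ e₁ = 0) (h₂₂ : br e₂ e₂ = 0) :
    Iso1 (fun x y => br x y) (tm (leibAlg 0)) := by
  refine iso1_tm_of_linearIndependent hdim he _ fun i j => ?_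
  fin_cases i <;> fin_cases j <;> simp [leibAlg, tbl, h₁₁, h₁₂, h₂₁, h₂₂]

theorem iso1_leibAlg_one (hdim : finrank ℂ L = 2) {e₁ e₂ : L}
    (he : LinearIndependent ℂ ![e₁, e₂]) (h₁₁ : br e₁ e₁ = 0) (h₁₂ : br e₁ e₂ = e₁)
    (h₂₁ : br e₂ e₁ = 0) (h₂₂ : br e₂ e₂ = 0) :
    Iso1 (fun x y => br x y) (tm (leibAlg 1)) := by
  refine iso1_tm_of_linearIndependent hdim he _ fun i j => ?_
  fin_cases i <;> fin_cases j <;> simp [leibAlg, tbl, h₁₁, h₁₂, h₂₁, h₂₂]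

theorem iso1_leibAlg_two (hdim : finrank ℂ L = 2) {e₁ e₂ : L}
    (he : LinearIndependent ℂ ![e₁, e₂]) (h₁₁ : br e₁ e₁ = 0) (h₁₂ : br e₁ e₂ = e₂)
    (h₂₁ : br e₂ e₁ = -e₂) (h₂₂ : br e₂ e₂ = 0) :
    Iso1 (fun x y => br x y) (tm (leibAlg 2)) := by
  refine iso1_tm_of_linearIndependent hdim he _ fun i j => ?_
  fin_cases i <;> fin_cases j <;> simp [leibAlg, tbl, h₁₁, h₁₂, h₂₁, h₂₂]

theorem apply_apply_self_eq_zero_of_leibniz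
    (hleib : ∀ x y z : L, br (br x y) z = br (br x z) y + br x (br y z)) (x y : L) :
    br x (br y y) = 0 :=
  left_eq_add.mp (hleib x y y)

theorem iso1_leibAlg_two_of_isAlt (hdim : finrank ℂ L = 2) (halt : br.IsAlt)
    (hnz : ∃ x y : L, br x y ≠ 0) : Iso1 (fun x y => br x y) (tm (leibAlg 2)) := by
  obtain ⟨a, w, hc⟩ := hnz
  have hw : w ≠ 0 := by rintro rfl; simp at hc
  have haw : LinearIndependent ℂ ![a, w] :=
    linearIndependent_pair_of_map_eq_zero (br.flip w) hc (halt.self_eq_zero w) hw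
  obtain ⟨α, β, hαβ⟩ := exists_eq_smul_add_smul hdim haw (br a w)
  have hac : br a (br a w) = β • br a w := by
    conv_lhs => rw [hαβ]
    simp [halt.self_eq_zero]
  have hwc : br w (br a w) = -α • br a w := by
    conv_lhs => rw [hαβ]
    simp [halt.self_eq_zero, ← halt.neg a w]
  obtain ⟨u, hu⟩ : ∃ u, br u (br a w) = br a w := by
    rcases eq_or_ne β 0 with rfl | hβ
    · have hα : α ≠ 0 := by rintro rfl; simp_all
      refine ⟨(-α)⁻¹ • w, ?_⟩
      rw [map_smul, LinearMap.smul_apply, hwc, inv_smul_smul₀ (neg_ne_zero.mpr hα)]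
    · exact ⟨β⁻¹ • a, by rw [map_smul, LinearMap.smul_apply, hac, inv_smul_smul₀ hβ]⟩
  refine iso1_leibAlg_two hdim ?_ (halt.self_eq_zero u) hu ?_ (halt.self_eq_zero _)
  · exact linearIndependent_pair_of_map_eq_zero (br.flip (br a w)) (by simpa [hu])
      (halt.self_eq_zero _) hc
  · rw [← halt.neg, hu]

theorem iso1_leibAlg_zero_or_one (hdim : finrank ℂ L = 2)
    (hleib : ∀ x y z : L, br (br x y) z = br (br x z) y + br x (br y z)) {e : L}
    (he : br e e ≠ 0) :
    Iso1 (fun x y => br x y) (tm (leibAlg 0)) ∨ Iso1 (fun x y => br x y) (tm (leibAlg 1)) := by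
  generalize hf_def : br e e = f at he
  have hf : ∀ x, br x f = 0 := fun x => hf_def ▸ apply_apply_self_eq_zero_of_leibniz hleib x e
  have hef : LinearIndependent ℂ ![e, f] :=
    linearIndependent_pair_of_map_eq_zero (br e) (hf_def ▸ he) (hf e) he
  obtain ⟨α, β, hfe⟩ := exists_eq_smul_add_smul hdim hef (br f e)
  -- the Leibniz identity at `(e, f, e)` reads `0 = [f, f] + [e, α e + β f] = α f`
  obtain rfl : α = 0 := by
    have h := hleib e f e
    simp only [hf, hf_def, hfe, map_add, map_smul, map_zero, LinearMap.zero_apply, smul_zero,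
      add_zero, zero_add] at h
    exact (smul_eq_zero.mp h.symm).resolve_right he
  rw [zero_smul, zero_add] at hfe
  rcases eq_or_ne β 0 with rfl | hβ
  · exact .inl (iso1_leibAlg_zero hdim hef hf_def (hf e) (by simpa using hfe) (hf f))
  · right
    set g := β⁻¹ • (e - β⁻¹ • f)
    have hfg : br f g = f := by simp [g, hf, hfe, hβ]
    have hgg : br g g = 0 := by simp [g, hf, hfe, hβ, hf_def]
    refine iso1_leibAlg_one hdim ?_ (hf f) hfg (hf g) hgg
    rw [LinearIndependent.pair_symm_iff]
    exact linearIndependent_pair_of_map_eq_zero (br e) (by simp [g, hf, hf_def, he, hβ])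
      (hf e) he

end Classification

/-- Every nonzero 2-dimensional Leibniz algebra over ℂ is isomorphic to
exactly one of L1 (`[e1,e1]=e2`), L2 (`[e1,e2]=e1`), L3 (`[e1,e2]=e2, [e2,e1]=-e2`);
in particular L1, L2, L3 are pairwise non-isomorphic. -/
theorem statement4 (L : Type*) [AddCommGroup L] [Module ℂ L]
    (hdim : Module.finrank ℂ L = 2)
    (br : L →ₗ[ℂ] L →ₗ[ℂ] L)
    (hleib : ∀ x y z : L, br (br x y) z = br (br x z) y + br x (br y z))
    (hnz : ∃ x y : L, br x y ≠ 0) :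
    (∃ i : Fin 3, Iso1 (fun x y => br x y) (tm (leibAlg i))) ∧
    (∀ i j : Fin 3, Iso1 (tm (leibAlg i)) (tm (leibAlg j)) → i = j) := by
  refine ⟨?_, fun i j => eq_of_iso1_leibAlg⟩
  by_cases halt : br.IsAlt
  · exact ⟨2, iso1_leibAlg_two_of_isAlt hdim halt hnz⟩
  · obtain ⟨e, he⟩ : ∃ e, br e e ≠ 0 := by simpa [LinearMap.IsAlt] using halt
    rcases iso1_leibAlg_zero_or_one hdim hleib he with h | h
    exacts [⟨0, h⟩, ⟨1, h⟩]
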